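/- With Kᵢ = ln(kᵢ) = ln(cot rᵢ) and total geodesic curvatures Lᵢ = kᵢ·lᵢ on a spherical bigon, the partial derivative ∂L₁/∂K₂ equals k₁·k₂·(-2·sin²(β₁)·sin²(r₁))/sin(θ), which is strictly negative. -/

import Mathlib

open Real Set

/-! `L₁ = 2 k₁ sin r₁ · β₁`, where `cot β₁` is affine in `k₂ = exp K₂`. Since
`arccot' = -sin² ∘ arccot`, the chain rule expresses `∂L₁/∂K₂` through `sin β₁` directly, and
every factor other than the sign is positive. -/

/-- The inverse cotangent, valued in `(0, π)`. -/
noncomputable def arccot (x : ℝ) : ℝ := π / 2 - Real.arctan x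

lemma arccot_mem_Ioo (x : ℝ) : arccot x ∈ Ioo 0 π := by
  obtain ⟨hlo, hhi⟩ := arctan_mem_Ioo x
  constructor <;> unfold arccot <;> linarith

lemma sin_arccot_sq (x : ℝ) : sin (arccot x) ^ 2 = 1 / (1 + x ^ 2) := by
  rw [arccot, sin_pi_div_two_sub, cos_arctan, div_pow, one_pow, sq_sqrt (by positivity)]

lemma hasDerivAt_arccot (x : ℝ) : HasDerivAt arccot (-sin (arccot x) ^ 2) x := by
  rw [sin_arccot_sq]
  exact (hasDerivAt_arctan x).const_sub (π / 2)

lemma hasDerivAt_arccot_exp_mul_add_div (a b c K : ℝ) :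
    HasDerivAt (fun K => arccot ((exp K * a + b) / c))
      (-sin (arccot ((exp K * a + b) / c)) ^ 2 * (exp K * a / c)) K :=
  (hasDerivAt_arccot _).comp K (((hasDerivAt_exp K).mul_const a).add_const b |>.div_const c)

lemma cot_pos_of_mem_Ioo {r : ℝ} (hr : r ∈ Ioo 0 (π / 2)) : 0 < cot r := by
  have hsin : 0 < sin r := sin_pos_of_pos_of_lt_pi hr.1 (by linarith [hr.2, pi_pos])
  have hcos : 0 < cos r := cos_pos_of_mem_Ioo ⟨by linarith [hr.1, pi_pos], hr.2⟩
  rw [cot_eq_cos_div_sin]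
  positivity

/-- On a spherical bigon with `Kᵢ = ln kᵢ = ln (cot rᵢ)` and total geodesic
curvatures `Lᵢ = kᵢ lᵢ`, the partial derivative `∂L₁/∂K₂` equals
`k₁ k₂ (-2 sin²β₁ sin²r₁)/sin θ`, which is strictly negative. -/
theorem dL1_dK2_neg (r₁ r₂ θ k₁ k₂ β₁ : ℝ)
    (hr₁ : r₁ ∈ Ioo 0 (π / 2)) (hr₂ : r₂ ∈ Ioo 0 (π / 2)) (hθ : θ ∈ Ioc 0 (π / 2))
    (hk₁ : k₁ = Real.cot r₁) (hk₂ : k₂ = Real.cot r₂)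
    (hβ₁ : β₁ = arccot ((k₂ * Real.sin r₁ + Real.cos r₁ * Real.cos θ) / Real.sin θ))
    (L₁ : ℝ → ℝ)
    (hL₁ : ∀ K : ℝ, L₁ K = k₁ *
      (2 * arccot ((Real.exp K * Real.sin r₁ + Real.cos r₁ * Real.cos θ) / Real.sin θ)
        * Real.sin r₁)) :
    HasDerivAt L₁ (k₁ * k₂ * (-2 * (Real.sin β₁)^2 * (Real.sin r₁)^2) / Real.sin θ)
      (Real.log k₂) ∧
    k₁ * k₂ * (-2 * (Real.sin β₁)^2 * (Real.sin r₁)^2) / Real.sin θ < 0 := by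
  have hk₁pos : 0 < k₁ := hk₁ ▸ cot_pos_of_mem_Ioo hr₁
  have hk₂pos : 0 < k₂ := hk₂ ▸ cot_pos_of_mem_Ioo hr₂
  have hsinr₁ : 0 < sin r₁ := sin_pos_of_pos_of_lt_pi hr₁.1 (by linarith [hr₁.2, pi_pos])
  have hsinθ : 0 < sin θ := sin_pos_of_pos_of_lt_pi hθ.1 (by linarith [hθ.2, pi_pos])
  obtain ⟨hβ₁pos, hβ₁lt⟩ : β₁ ∈ Ioo 0 π := hβ₁ ▸ arccot_mem_Ioo _
  have hsinβ₁ : 0 < sin β₁ := sin_pos_of_pos_of_lt_pi hβ₁pos hβ₁lt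
  refine ⟨?_, ?_⟩
  · have hderiv := hasDerivAt_arccot_exp_mul_add_div (sin r₁) (cos r₁ * cos θ) (sin θ) (log k₂)
    rw [exp_log hk₂pos, ← hβ₁] at hderiv
    rw [funext hL₁]
    exact (((hderiv.const_mul 2).mul_const (sin r₁)).const_mul k₁).congr_deriv (by ring)
  · rw [show k₁ * k₂ * (-2 * sin β₁ ^ 2 * sin r₁ ^ 2) / sin θ
      = -(k₁ * k₂ * (2 * sin β₁ ^ 2 * sin r₁ ^ 2) / sin θ) by ring, neg_lt_zero]
    positivity
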